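/- arXiv:2208.11966 — 2 statements merged into one kernel-verified Lean document; each statement's English description precedes it below -/
import Mathlib

section
/- Each z_{i,j} is a monomial x^{d_{i,j}} in ℛ for a unique exponent vector d_{i,j} : Q_1 → ℕ. Let Φ be the ℤ-linear map from the free abelian group on the index set {(0,0)} ∪ {(i,j) : 1 ≤ i ≤ m, 0 ≤ j ≤ s_i} ∪ {(m+1,0)} to the free abelian group ℤ^{Q_1}, sending the basis element e_{i,j} to d_{i,j}. Then the kernel of Φ is generated as an abelian group by the m vectors v_j for 2 ≤ j ≤ m+1, where v_j := e_{0,0} + e_{j,s_j} − e_{1,s_1} − Σ_{t=1}^{j−1}(e_{t,1} + e_{t,2} + ⋯ + e_{t,s_t−1}) − e_{j−1,0} (the exponent vector of the quasiminor relation 𝗓_{0,0}𝗓_{j,s_j} = 𝗓_{1,s_1}(∏_{t=1}^{j−1} 𝗓_{t,1}⋯𝗓_{t,s_t−1})𝗓_{j−1,0}). -/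
open MvPolynomial

/-- Hirzebruch–Jung continued fraction `[γ_1,…,γ_s] = γ_1 − 1/(γ_2 − 1/(⋯ − 1/γ_s))`
(with the Mathlib convention `1/0 = 0`, so that `hjcf [γ] = γ`). -/
def hjcf : List ℚ → ℚ
  | [] => 0
  | g :: rest => g - 1 / hjcf rest

/-- Arrows of the quiver of the reconstruction algebra of type `A`:
`Sum.inl v` is the clockwise arrow `c_{v,v-1} : v → v−1` (`c_{0,n} : 0 → n` for `v = 0`),
`Sum.inr (Sum.inl v)` is the anticlockwise arrow `a_{v,v+1} : v → v+1` (`a_{n,0}` for `v = n`),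
`Sum.inr (Sum.inr h)` is the extra arrow `k_{h+1} : l_{h+1} → 0`. -/
abbrev Arrow (n ℓ : ℕ) : Type := Fin (n + 1) ⊕ (Fin (n + 1) ⊕ Fin ℓ)

open Fin.NatCast in
/-- The clockwise arrow `c_{v,v−1}` (indices mod `n+1`). -/
def cc (n ℓ : ℕ) (v : ℕ) : Arrow n ℓ := Sum.inl (v : Fin (n + 1))

open Fin.NatCast in
/-- The anticlockwise arrow `a_{v,v+1}` (indices mod `n+1`). -/
def aa (n ℓ : ℕ) (v : ℕ) : Arrow n ℓ := Sum.inr (Sum.inl (v : Fin (n + 1)))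

/-- The arrow `k_h`, with the conventions `k_0 = c_{1,0}` and `k_h = a_{n,0}` for `h > ℓ`
(in particular `k_{ℓ+1} = a_{n,0}`). -/
def kArr (n ℓ : ℕ) (h : ℕ) : Arrow n ℓ :=
  if hh : 1 ≤ h ∧ h ≤ ℓ then Sum.inr (Sum.inr ⟨h - 1, by omega⟩)
  else if h = 0 then cc n ℓ 1 else aa n ℓ n

open Fin.NatCast in
/-- Tail vertex of an arrow, where `L h` is the tail of `k_h`. -/
def tl (n ℓ : ℕ) (L : ℕ → ℕ) : Arrow n ℓ → Fin (n + 1)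
  | Sum.inl v => v
  | Sum.inr (Sum.inl v) => v
  | Sum.inr (Sum.inr h) => ((L (h.val + 1) : ℕ) : Fin (n + 1))

open Fin.NatCast in
/-- Head vertex of an arrow. -/
def hd (n ℓ : ℕ) : Arrow n ℓ → Fin (n + 1)
  | Sum.inl v => ((v.val + n : ℕ) : Fin (n + 1))
  | Sum.inr (Sum.inl v) => ((v.val + 1 : ℕ) : Fin (n + 1))
  | Sum.inr (Sum.inr _) => 0

/-- The action of a torus element `μ ∈ G = (ℂ*)^{Q_0}` on
`ℛ = ℂ[x_q : q ∈ Q_1]`, via `μ · x_q = μ_{t q}⁻¹ μ_{h q} x_q`. -/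
noncomputable def torusAct (n ℓ : ℕ) (L : ℕ → ℕ) (μ : Fin (n + 1) → ℂˣ) :
    MvPolynomial (Arrow n ℓ) ℂ →ₐ[ℂ] MvPolynomial (Arrow n ℓ) ℂ :=
  aeval fun q => C ((μ (tl n ℓ L q) : ℂ)⁻¹ * (μ (hd n ℓ q) : ℂ)) * X q

/-- The invariant subalgebra `ℛ^G`. -/
noncomputable def invAlg (n ℓ : ℕ) (L : ℕ → ℕ) :
    Subalgebra ℂ (MvPolynomial (Arrow n ℓ) ℂ) where
  carrier := {f | ∀ μ, torusAct n ℓ L μ f = f}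
  mul_mem' := fun ha hb μ => by rw [map_mul, ha μ, hb μ]
  add_mem' := fun ha hb μ => by rw [map_add, ha μ, hb μ]
  algebraMap_mem' := fun c μ => (torusAct n ℓ L μ).commutes c

/-- `x_{C_{0,j}}`: the monomial of the clockwise path from `0` to `j`
(for `j = 0` this is the full clockwise loop `C_{0,0}`). -/
noncomputable def xC0 (n ℓ : ℕ) (j : ℕ) : MvPolynomial (Arrow n ℓ) ℂ :=
  X (cc n ℓ 0) * ∏ v ∈ Finset.Icc (j + 1) n, X (cc n ℓ v)

/-- `x_{A_{0,j}}`: the monomial of the anticlockwise path from `0` to `j` (for `j ≥ 1`). -/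
noncomputable def xA0 (n ℓ : ℕ) (j : ℕ) : MvPolynomial (Arrow n ℓ) ℂ :=
  ∏ v ∈ Finset.range j, X (aa n ℓ v)

/-- The cycle monomials `z_{i,j}`: `z_{0,0} = x_{C_{0,0}}`; for `1 ≤ i ≤ e−2 = ℓ+1`:
`z_{i,0} = x_{C_{0,l_i}}·x_{k_i}`, `z_{i,s_i} = x_{A_{0,l_{i−1}}}·x_{k_{i−1}}`
(where `s_i = l_i − l_{i−1} + 1`), and
`z_{i,j} = x_{c_{l_i−j+1,l_i−j}}·x_{a_{l_i−j,l_i−j+1}}` for `1 ≤ j ≤ l_i − l_{i−1}`;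
finally `z_{e−1,0} = z_{ℓ+2,0} = x_{A_{0,0}}`. -/
noncomputable def zmon (n ℓ : ℕ) (L : ℕ → ℕ) (i j : ℕ) : MvPolynomial (Arrow n ℓ) ℂ :=
  if i = 0 then ∏ v ∈ Finset.range (n + 1), X (cc n ℓ v)
  else if i = ℓ + 2 then ∏ v ∈ Finset.range (n + 1), X (aa n ℓ v)
  else if j = 0 then xC0 n ℓ (L i) * X (kArr n ℓ i)
  else if j = L i - L (i - 1) + 1 then xA0 n ℓ (L (i - 1)) * X (kArr n ℓ (i - 1))
  else X (cc n ℓ (L i - j + 1)) * X (aa n ℓ (L i - j))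

/-- Number of `j`-indices of the variables `𝗓_{i,j}` in row `i`: one variable `𝗓_{0,0}`
for `i = 0`, one variable `𝗓_{m+1,0}` for `i = m+1`, and `s_i + 1` variables
`𝗓_{i,0},…,𝗓_{i,s_i}` for `1 ≤ i ≤ m`. -/
def nj (m : ℕ) (s : ℕ → ℕ) (i : ℕ) : ℕ := if i = 0 ∨ i = m + 1 then 1 else s i + 1

/-- The index type of the variables of the polynomial ring `ℂ[𝗓]`. -/
abbrev ZIdx (m : ℕ) (s : ℕ → ℕ) : Type := Σ i : Fin (m + 2), Fin (nj m s i.val)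

/-- The variable index `(i,j)` (with a junk value for out-of-range indices). -/
def zidx (m : ℕ) (s : ℕ → ℕ) (i j : ℕ) : ZIdx m s :=
  if h : i < m + 2 ∧ j < nj m s i then ⟨⟨i, h.1⟩, ⟨j, h.2⟩⟩
  else ⟨⟨0, by omega⟩, ⟨0, by simp [nj]⟩⟩

/-- The polynomial ring `ℂ[𝗓]`. -/
abbrev CZ (m : ℕ) (s : ℕ → ℕ) : Type := MvPolynomial (ZIdx m s) ℂ

/-- The variable `𝗓_{i,j}`. -/
noncomputable def Zv (m : ℕ) (s : ℕ → ℕ) (i j : ℕ) : CZ m s := X (zidx m s i j)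

/-- `W_t = 𝗓_{t,1}·𝗓_{t,2}⋯𝗓_{t,s_t−1}`. -/
noncomputable def Wq (m : ℕ) (s : ℕ → ℕ) (t : ℕ) : CZ m s :=
  ∏ u ∈ Finset.Icc 1 (s t - 1), Zv m s t u

/-- The quasiminor `q_{i,j} = 𝗓_{i−1,0}·𝗓_{j,s_j} − 𝗓_{i,s_i}·(∏_{t=i}^{j−1} W_t)·𝗓_{j−1,0}`. -/
noncomputable def qm (m : ℕ) (s : ℕ → ℕ) (i j : ℕ) : CZ m s :=
  Zv m s (i - 1) 0 * Zv m s j (s j)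
    - Zv m s i (s i) * (∏ t ∈ Finset.Icc i (j - 1), Wq m s t) * Zv m s (j - 1) 0

/-- The quasideterminantal ideal `QDet(𝗓)`, generated by the quasiminors `q_{i,j}`
for `1 ≤ i < j ≤ m+1`. -/
noncomputable def QDet (m : ℕ) (s : ℕ → ℕ) : Ideal (CZ m s) :=
  Ideal.span {q | ∃ i j : ℕ, 1 ≤ i ∧ i < j ∧ j ≤ m + 1 ∧ q = qm m s i j}

/-- `s_t = β_t − 1` for `1 ≤ t ≤ m` and `s_{m+1} = 0`. -/
def sfun (m : ℕ) (β : ℕ → ℕ) (t : ℕ) : ℕ := if t ≤ m then β t - 1 else 0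

/-- `E = 𝗓_{0,0}·𝗓_{2,s_2}·𝗓_{3,s_3}⋯𝗓_{m+1,s_{m+1}}`. -/
noncomputable def Emon (m : ℕ) (s : ℕ → ℕ) : CZ m s :=
  Zv m s 0 0 * ∏ t ∈ Finset.Icc 2 (m + 1), Zv m s t (s t)

/-- The ℤ-linear map `Φ` from the free abelian group on the variable index set of `ℂ[𝗓]`
to `ℤ^{Q_1}`, sending the basis element `e_{i,j}` to the exponent vector `d_{i,j}`. -/
noncomputable def PhiMap (n ℓ m : ℕ) (s : ℕ → ℕ)
    (d : ZIdx m s → (Arrow n ℓ →₀ ℕ)) :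
    (ZIdx m s →₀ ℤ) →ₗ[ℤ] (Arrow n ℓ → ℤ) :=
  Finsupp.lsum ℤ fun p =>
    LinearMap.toSpanSingleton ℤ (Arrow n ℓ → ℤ) (fun q => ((d p q : ℕ) : ℤ))

/-- The exponent vector `v_j` (for `2 ≤ j ≤ m+1`) of the quasiminor relation
`𝗓_{0,0}𝗓_{j,s_j} = 𝗓_{1,s_1}(∏_{t=1}^{j−1} 𝗓_{t,1}⋯𝗓_{t,s_t−1})𝗓_{j−1,0}`, namely
`v_j = e_{0,0} + e_{j,s_j} − e_{1,s_1} − Σ_{t=1}^{j−1}(e_{t,1}+⋯+e_{t,s_t−1}) − e_{j−1,0}`. -/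
noncomputable def vRel (m : ℕ) (s : ℕ → ℕ) (j : ℕ) : ZIdx m s →₀ ℤ :=
  Finsupp.single (zidx m s 0 0) 1 + Finsupp.single (zidx m s j (s j)) 1
    - Finsupp.single (zidx m s 1 (s 1)) 1
    - (∑ t ∈ Finset.Icc 1 (j - 1), ∑ u ∈ Finset.Icc 1 (s t - 1),
        Finsupp.single (zidx m s t u) 1)
    - Finsupp.single (zidx m s (j - 1) 0) 1

/-!
Every `z_{i,j}` is a product of distinct arrow variables, so `d_{i,j}` is the indicator vector of
the arrows of a cycle. Each `v_j` lies in the kernel because both sides of its quasiminor relation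
pass through the same arrows: the inner variables `z_{t,u}`, `1 ≤ u < s_t`, of row `t` cover the
arrows `c_{w+1,w}`, `a_{w,w+1}` for `l_{t-1} ≤ w < l_t`, and these blocks tile `[l_0, l_{j-1})`.

The coordinates `(t, s_t)`, `2 ≤ t ≤ m+1`, are pivots: `v_j` is `δ_{jt}` there, so subtracting a
combination of the `v_j` from a kernel element leaves one vanishing at the pivots, and such an
element is zero. Indeed, among the non-pivot variables the arrow `a_{0,1}` lies only on
`z_{1,s_1}`, the arrow `a_{w,w+1}` (`0 < w < n`) only on the inner `z_{t,u}` with `l_t - u = w`,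
`a_{n,0}` only on `z_{m,0}` and `k_h` only on `z_{h,0}`; so the kernel equation read at these
arrows kills all of them, and then read at `c_{0,n}` it kills `z_{0,0}`.
-/

open Finset

theorem LinearMap.ker_eq_span_image_of_pivots {R P M ι : Type*} [Ring R] [AddCommGroup M]
    [Module R M] [DecidableEq ι] (f : (P →₀ R) →ₗ[R] M) (J : Finset ι) (v : ι → P →₀ R)
    (piv : ι → P) (hv : ∀ j ∈ J, f (v j) = 0)
    (hpiv : ∀ j ∈ J, ∀ k ∈ J, v j (piv k) = if j = k then 1 else 0)
    (hsep : ∀ y ∈ LinearMap.ker f, (∀ k ∈ J, y (piv k) = 0) → y = 0) :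
    LinearMap.ker f = Submodule.span R (v '' J) := by
  refine le_antisymm (fun x hx => ?_) (Submodule.span_le.mpr ?_)
  · set c := ∑ k ∈ J, x (piv k) • v k
    have hc : c ∈ Submodule.span R (v '' J) :=
      Submodule.sum_mem _ fun k hk => Submodule.smul_mem _ _ (Submodule.subset_span ⟨k, hk, rfl⟩)
    have hcker : c ∈ LinearMap.ker f :=
      Submodule.sum_mem _ fun k hk => Submodule.smul_mem _ _ (hv k hk)
    have hxc : x - c = 0 := by
      refine hsep _ (sub_mem hx hcker) fun k hk => ?_
      have hsum : ∑ j ∈ J, x (piv j) * v j (piv k) = x (piv k) := by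
        rw [Finset.sum_congr rfl fun j hj => by rw [hpiv j hj k hk]]
        simp [hk]
      simp [c, hsum]
    rwa [sub_eq_zero.mp hxc]
  · rintro _ ⟨j, hj, rfl⟩
    exact hv j hj

section Arcs

variable {α : Type*}

noncomputable def arcVec (f : ℕ → α) (a b : ℕ) : α →₀ ℕ :=
  ∑ v ∈ Ico a b, Finsupp.single (f v) 1

lemma arcVec_add_arcVec (f : ℕ → α) {a b c : ℕ} (hab : a ≤ b) (hbc : b ≤ c) :
    arcVec f a b + arcVec f b c = arcVec f a c :=
  Finset.sum_Ico_consecutive _ hab hbc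

lemma arcVec_succ_self (f : ℕ → α) (a : ℕ) : arcVec f a (a + 1) = Finsupp.single (f a) 1 := by
  simp [arcVec]

lemma arcVec_apply_ne_zero_iff {f : ℕ → α} {a b : ℕ} {q : α} :
    arcVec f a b q ≠ 0 ↔ ∃ v ∈ Ico a b, f v = q := by
  rw [arcVec, Finsupp.finsetSum_apply, Ne, Finset.sum_eq_zero_iff, not_forall]
  refine exists_congr fun v => ?_
  rw [Classical.not_imp, ← Ne, Finsupp.single_apply_ne_zero]
  simp [eq_comm]

lemma arcVec_apply_ne_zero_iff_of_injOn {f : ℕ → α} {N a b w : ℕ}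
    (hf : Set.InjOn f (Set.Iio N)) (hb : b ≤ N) (hw : w < N) :
    arcVec f a b (f w) ≠ 0 ↔ a ≤ w ∧ w < b := by
  rw [arcVec_apply_ne_zero_iff]
  constructor
  · rintro ⟨v, hv, hvw⟩
    rw [mem_Ico] at hv
    rw [← hf (show v < N by omega) hw hvw]
    exact hv
  · intro h
    exact ⟨w, mem_Ico.mpr h, rfl⟩

lemma prod_X_eq_monomial_arcVec {σ : Type*} (f : ℕ → σ) (a b : ℕ) :
    ∏ v ∈ Ico a b, (X (f v) : MvPolynomial σ ℂ) = monomial (arcVec f a b) 1 := by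
  simp [arcVec, monomial_sum_one, X]

end Arcs

section Arrows

variable {n ℓ : ℕ}

open Fin.NatCast in
lemma cc_injOn : Set.InjOn (cc n ℓ) (Set.Iio (n + 1)) := fun v hv w hw h => by
  have h' := congrArg Fin.val (Sum.inl.inj h)
  rwa [Fin.val_cast_of_lt hv, Fin.val_cast_of_lt hw] at h'

open Fin.NatCast in
lemma aa_injOn : Set.InjOn (aa n ℓ) (Set.Iio (n + 1)) := fun v hv w hw h => by
  have h' := congrArg Fin.val (Sum.inl.inj (Sum.inr.inj h))
  rwa [Fin.val_cast_of_lt hv, Fin.val_cast_of_lt hw] at h'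

@[simp] lemma cc_ne_aa (v w : ℕ) : cc n ℓ v ≠ aa n ℓ w := by simp [cc, aa]

@[simp] lemma aa_ne_cc (v w : ℕ) : aa n ℓ v ≠ cc n ℓ w := (cc_ne_aa w v).symm

lemma kArr_zero : kArr n ℓ 0 = cc n ℓ 1 := by simp [kArr]

lemma kArr_of_lt {h : ℕ} (hh : ℓ < h) : kArr n ℓ h = aa n ℓ n := by
  rw [kArr, dif_neg (by omega), if_neg (by omega)]

lemma kArr_of_mem {h : ℕ} (h1 : 1 ≤ h) (h2 : h ≤ ℓ) :
    kArr n ℓ h = Sum.inr (Sum.inr ⟨h - 1, by omega⟩) := by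
  rw [kArr, dif_pos ⟨h1, h2⟩]

lemma cc_ne_kArr {h : ℕ} (h1 : 1 ≤ h) (h2 : h ≤ ℓ) (v : ℕ) : cc n ℓ v ≠ kArr n ℓ h := by
  simp [kArr_of_mem h1 h2, cc]

lemma aa_ne_kArr {h : ℕ} (h1 : 1 ≤ h) (h2 : h ≤ ℓ) (v : ℕ) : aa n ℓ v ≠ kArr n ℓ h := by
  simp [kArr_of_mem h1 h2, aa]

lemma kArr_eq_kArr_iff {h h' : ℕ} (h1 : 1 ≤ h) (h2 : h ≤ ℓ) (hh' : h' ≤ ℓ + 1) :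
    kArr n ℓ h' = kArr n ℓ h ↔ h' = h := by
  refine ⟨fun heq => ?_, fun heq => heq ▸ rfl⟩
  rcases Nat.eq_zero_or_pos h' with rfl | hpos
  · exact absurd heq (kArr_zero (n := n) ▸ cc_ne_kArr h1 h2 1)
  by_cases hle : h' ≤ ℓ
  · rw [kArr_of_mem hpos hle, kArr_of_mem h1 h2] at heq
    have := congrArg Fin.val (Sum.inr.inj (Sum.inr.inj heq))
    simp only at this
    omega
  · exact absurd heq (kArr_of_lt (n := n) (by omega : ℓ < h') ▸ aa_ne_kArr h1 h2 n)

lemma kArr_eq_aa_iff {h w : ℕ} (hh : h ≤ ℓ + 1) (hw : w ≤ n) :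
    kArr n ℓ h = aa n ℓ w ↔ h = ℓ + 1 ∧ w = n := by
  rcases Nat.eq_zero_or_pos h with rfl | hpos
  · simp [kArr_zero]
  by_cases hle : h ≤ ℓ
  · simp [kArr_of_mem hpos hle, aa]
    omega
  · rw [kArr_of_lt (by omega), aa_injOn.eq_iff (by simp) (by simp; omega)]
    omega

lemma kArr_ne_cc_zero (hn : 1 ≤ n) {h : ℕ} (hh : h ≤ ℓ) : kArr n ℓ h ≠ cc n ℓ 0 := by
  rcases Nat.eq_zero_or_pos h with rfl | hpos
  · rw [kArr_zero, cc_injOn.ne_iff (by simp; omega) (by simp)]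
    exact one_ne_zero
  · exact (cc_ne_kArr hpos hh 0).symm

end Arrows

section Evaluation

variable {n ℓ : ℕ}

lemma add_apply_ne_zero_iff {α : Type*} (f g : α →₀ ℕ) (a : α) :
    (f + g) a ≠ 0 ↔ f a ≠ 0 ∨ g a ≠ 0 := by
  rw [Finsupp.add_apply, Ne, Nat.add_eq_zero_iff, not_and_or]

lemma single_one_apply_ne_zero_iff {α : Type*} (a x : α) :
    Finsupp.single a (1 : ℕ) x ≠ 0 ↔ a = x := by
  rw [Finsupp.single_apply_ne_zero]
  exact ⟨fun h => h.1.symm, fun h => ⟨h.symm, one_ne_zero⟩⟩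

lemma arcVec_cc_apply_cc_ne_zero_iff {a b w : ℕ} (hb : b ≤ n + 1) (hw : w ≤ n) :
    arcVec (cc n ℓ) a b (cc n ℓ w) ≠ 0 ↔ a ≤ w ∧ w < b :=
  arcVec_apply_ne_zero_iff_of_injOn cc_injOn hb (Nat.lt_succ_of_le hw)

lemma arcVec_aa_apply_aa_ne_zero_iff {a b w : ℕ} (hb : b ≤ n + 1) (hw : w ≤ n) :
    arcVec (aa n ℓ) a b (aa n ℓ w) ≠ 0 ↔ a ≤ w ∧ w < b :=
  arcVec_apply_ne_zero_iff_of_injOn aa_injOn hb (Nat.lt_succ_of_le hw)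

lemma arcVec_cc_apply_aa (a b w : ℕ) : arcVec (cc n ℓ) a b (aa n ℓ w) = 0 := by
  by_contra h
  obtain ⟨v, -, hv⟩ := arcVec_apply_ne_zero_iff.mp h
  exact cc_ne_aa v w hv

lemma arcVec_aa_apply_cc (a b w : ℕ) : arcVec (aa n ℓ) a b (cc n ℓ w) = 0 := by
  by_contra h
  obtain ⟨v, -, hv⟩ := arcVec_apply_ne_zero_iff.mp h
  exact aa_ne_cc v w hv

lemma arcVec_cc_apply_kArr {h : ℕ} (h1 : 1 ≤ h) (h2 : h ≤ ℓ) (a b : ℕ) :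
    arcVec (cc n ℓ) a b (kArr n ℓ h) = 0 := by
  by_contra hne
  obtain ⟨v, -, hv⟩ := arcVec_apply_ne_zero_iff.mp hne
  exact cc_ne_kArr h1 h2 v hv

lemma arcVec_aa_apply_kArr {h : ℕ} (h1 : 1 ≤ h) (h2 : h ≤ ℓ) (a b : ℕ) :
    arcVec (aa n ℓ) a b (kArr n ℓ h) = 0 := by
  by_contra hne
  obtain ⟨v, -, hv⟩ := arcVec_apply_ne_zero_iff.mp hne
  exact aa_ne_kArr h1 h2 v hv

end Evaluation

section Exponents

noncomputable def zmonExp (n ℓ : ℕ) (L : ℕ → ℕ) (i j : ℕ) : Arrow n ℓ →₀ ℕ :=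
  if i = 0 then arcVec (cc n ℓ) 0 (n + 1)
  else if i = ℓ + 2 then arcVec (aa n ℓ) 0 (n + 1)
  else if j = 0 then
    Finsupp.single (cc n ℓ 0) 1 + arcVec (cc n ℓ) (L i + 1) (n + 1)
      + Finsupp.single (kArr n ℓ i) 1
  else if j = L i - L (i - 1) + 1 then
    arcVec (aa n ℓ) 0 (L (i - 1)) + Finsupp.single (kArr n ℓ (i - 1)) 1
  else Finsupp.single (cc n ℓ (L i - j + 1)) 1 + Finsupp.single (aa n ℓ (L i - j)) 1

variable {n ℓ : ℕ} {L : ℕ → ℕ}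

lemma zmon_eq_monomial_zmonExp (i j : ℕ) :
    zmon n ℓ L i j = monomial (zmonExp n ℓ L i j) 1 := by
  have hC : ∀ k, xC0 n ℓ k =
      monomial (Finsupp.single (cc n ℓ 0) 1 + arcVec (cc n ℓ) (k + 1) (n + 1)) 1 := fun k => by
    rw [xC0, ← Finset.Ico_add_one_right_eq_Icc, prod_X_eq_monomial_arcVec, X, monomial_mul,
      one_mul]
  have hA : ∀ k, xA0 n ℓ k = monomial (arcVec (aa n ℓ) 0 k) 1 := fun k => by
    rw [xA0, Finset.range_eq_Ico, prod_X_eq_monomial_arcVec]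
  unfold zmon zmonExp
  split_ifs
  · rw [Finset.range_eq_Ico, prod_X_eq_monomial_arcVec]
  · rw [Finset.range_eq_Ico, prod_X_eq_monomial_arcVec]
  · rw [hC, X, monomial_mul, one_mul]
  · rw [hA, X, monomial_mul, one_mul]
  · rw [X, X, monomial_mul, one_mul]

lemma zmonExp_zero_row (j : ℕ) : zmonExp n ℓ L 0 j = arcVec (cc n ℓ) 0 (n + 1) := by
  rw [zmonExp, if_pos rfl]

end Exponents

lemma index_cases {m : ℕ} {s : ℕ → ℕ} {i j : ℕ} (hi : i < m + 2) (hj : j < nj m s i) :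
    (i = 0 ∧ j = 0) ∨ (i = m + 1 ∧ j = 0) ∨
      (1 ≤ i ∧ i ≤ m ∧ (j = 0 ∨ j = s i ∨ (1 ≤ j ∧ j < s i))) := by
  unfold nj at hj
  split_ifs at hj <;> omega

lemma nj_of_le {m : ℕ} (s : ℕ → ℕ) {i : ℕ} (h1 : 1 ≤ i) (h2 : i ≤ m) : nj m s i = s i + 1 := by
  rw [nj, if_neg (by omega)]

lemma zidx_eq {m : ℕ} {s : ℕ → ℕ} {i j : ℕ} (hi : i < m + 2) (hj : j < nj m s i) :
    zidx m s i j = ⟨⟨i, hi⟩, ⟨j, hj⟩⟩ :=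
  dif_pos ⟨hi, hj⟩

lemma zidx_inj {m : ℕ} {s : ℕ → ℕ} {a b c d : ℕ} (ha : a < m + 2) (hb : b < nj m s a)
    (hc : c < m + 2) (hd : d < nj m s c) : zidx m s a b = zidx m s c d ↔ a = c ∧ b = d := by
  rw [zidx_eq ha hb, zidx_eq hc hd]
  refine ⟨fun h => ⟨congrArg (fun p : ZIdx m s => (p.1 : ℕ)) h,
    congrArg (fun p : ZIdx m s => (p.2 : ℕ)) h⟩, ?_⟩
  rintro ⟨rfl, rfl⟩
  rfl

/-- The combinatorial data behind the quiver: `L h = l_h` are the tails of the extra arrows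
and `s t` the number of variables `𝗓_{t,j}` beyond `𝗓_{t,0}`. -/
structure TailSeq (n ℓ m : ℕ) (L s : ℕ → ℕ) : Prop where
  m_eq : m = ℓ + 1
  L_zero : L 0 = 1
  L_last : L m = n
  L_mono : ∀ a b, a ≤ b → b ≤ m → L a ≤ L b
  s_eq : ∀ t, 1 ≤ t → t ≤ m → s t = L t - L (t - 1) + 1
  s_last : s (m + 1) = 0

namespace TailSeq

variable {n ℓ m : ℕ} {L s : ℕ → ℕ}

lemma one_le_L (T : TailSeq n ℓ m L s) {t : ℕ} (ht : t ≤ m) : 1 ≤ L t :=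
  T.L_zero ▸ T.L_mono 0 t (Nat.zero_le t) ht

lemma L_le (T : TailSeq n ℓ m L s) {t : ℕ} (ht : t ≤ m) : L t ≤ n :=
  T.L_last ▸ T.L_mono t m ht le_rfl

lemma one_le_n (T : TailSeq n ℓ m L s) : 1 ≤ n := T.L_last ▸ T.one_le_L le_rfl

lemma eq_of_mem_block (T : TailSeq n ℓ m L s) {i t w : ℕ} (hi : 1 ≤ i) (him : i ≤ m)
    (ht : 1 ≤ t) (htm : t ≤ m)
    (hwi : L (i - 1) ≤ w ∧ w < L i) (hwt : L (t - 1) ≤ w ∧ w < L t) : i = t := by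
  by_contra hne
  rcases Nat.lt_or_gt_of_ne hne with hlt | hgt
  · have := T.L_mono i (t - 1) (by omega) (by omega)
    omega
  · have := T.L_mono t (i - 1) (by omega) (by omega)
    omega

lemma row_bounds (T : TailSeq n ℓ m L s) {i : ℕ} (h1 : 1 ≤ i) (h2 : i ≤ m) :
    1 ≤ L (i - 1) ∧ L (i - 1) ≤ L i ∧ L i ≤ n ∧ s i = L i - L (i - 1) + 1 ∧
      nj m s i = s i + 1 :=
  ⟨T.one_le_L (by omega), T.L_mono _ _ (by omega) h2, T.L_le h2, T.s_eq i h1 h2, nj_of_le s h1 h2⟩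

lemma lt_nj (T : TailSeq n ℓ m L s) {i j : ℕ} (hi1 : 1 ≤ i) (him : i ≤ m + 1) (hj : j ≤ s i) :
    j < nj m s i := by
  unfold nj
  split_ifs with h
  · have := T.s_last
    rcases h with rfl | rfl <;> omega
  · omega

lemma zmonExp_last_row (T : TailSeq n ℓ m L s) (j : ℕ) :
    zmonExp n ℓ L (m + 1) j = arcVec (aa n ℓ) 0 (n + 1) := by
  rw [zmonExp, if_neg (by omega), if_pos (by rw [T.m_eq])]

lemma zmonExp_first (T : TailSeq n ℓ m L s) {i : ℕ} (hi : 1 ≤ i) (him : i ≤ m) :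
    zmonExp n ℓ L i 0 = Finsupp.single (cc n ℓ 0) 1 + arcVec (cc n ℓ) (L i + 1) (n + 1)
      + Finsupp.single (kArr n ℓ i) 1 := by
  have := T.m_eq
  rw [zmonExp, if_neg (by omega), if_neg (by omega), if_pos rfl]

lemma zmonExp_width (T : TailSeq n ℓ m L s) {i : ℕ} (hi : 1 ≤ i) (him : i ≤ m) :
    zmonExp n ℓ L i (s i)
      = arcVec (aa n ℓ) 0 (L (i - 1)) + Finsupp.single (kArr n ℓ (i - 1)) 1 := by
  have := T.m_eq
  rw [zmonExp, if_neg (by omega), if_neg (by omega), if_neg (by rw [T.s_eq i hi him]; omega),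
    if_pos (T.s_eq i hi him)]

lemma zmonExp_inner (T : TailSeq n ℓ m L s) {i j : ℕ} (hi : 1 ≤ i) (him : i ≤ m) (hj : 1 ≤ j)
    (hjs : j < s i) :
    zmonExp n ℓ L i j
      = Finsupp.single (cc n ℓ (L i - j + 1)) 1 + Finsupp.single (aa n ℓ (L i - j)) 1 := by
  have := T.m_eq
  rw [zmonExp, if_neg (by omega), if_neg (by omega), if_neg (by omega),
    if_neg (by rw [← T.s_eq i hi him]; omega)]

lemma zmonExp_succ_width (T : TailSeq n ℓ m L s) {k : ℕ} (hk : 1 ≤ k) (hkm : k ≤ m) :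
    zmonExp n ℓ L (k + 1) (s (k + 1))
      = arcVec (aa n ℓ) 0 (L k) + Finsupp.single (kArr n ℓ k) 1 := by
  rcases Nat.lt_or_ge k m with hlt | hge
  · rw [T.zmonExp_width (by omega) hlt, Nat.add_one_sub_one]
  · obtain rfl : k = m := le_antisymm hkm hge
    rw [T.zmonExp_last_row, T.L_last, kArr_of_lt (by rw [T.m_eq]; omega), ← arcVec_succ_self,
      arcVec_add_arcVec _ (Nat.zero_le _) (Nat.le_succ n)]

lemma sum_zmonExp_inner (T : TailSeq n ℓ m L s) {t : ℕ} (ht : 1 ≤ t) (htm : t ≤ m) :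
    ∑ u ∈ Icc 1 (s t - 1), zmonExp n ℓ L t u
      = arcVec (cc n ℓ) (L (t - 1) + 1) (L t + 1) + arcVec (aa n ℓ) (L (t - 1)) (L t) := by
  have hst := T.s_eq t ht htm
  have hmono := T.L_mono (t - 1) t (by omega) htm
  calc ∑ u ∈ Icc 1 (s t - 1), zmonExp n ℓ L t u
      = ∑ u ∈ Ico 1 (s t), (fun v => Finsupp.single (cc n ℓ (v + 1)) 1
          + Finsupp.single (aa n ℓ v) 1) (L t - u) := by
        rw [← Finset.Ico_add_one_right_eq_Icc, Nat.sub_add_cancel (by omega)]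
        refine Finset.sum_congr rfl fun u hu => ?_
        rw [mem_Ico] at hu
        exact T.zmonExp_inner ht htm hu.1 hu.2
    _ = ∑ v ∈ Ico (L (t - 1)) (L t),
          (Finsupp.single (cc n ℓ (v + 1)) 1 + Finsupp.single (aa n ℓ v) 1) := by
        rw [Finset.sum_Ico_reflect (fun v => Finsupp.single (cc n ℓ (v + 1)) 1
          + Finsupp.single (aa n ℓ v) 1) 1 (by omega : s t ≤ L t + 1)]
        congr 2; omega
    _ = arcVec (cc n ℓ) (L (t - 1) + 1) (L t + 1) + arcVec (aa n ℓ) (L (t - 1)) (L t) := by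
        rw [Finset.sum_add_distrib, arcVec, arcVec,
          Finset.sum_Ico_add' (fun v => Finsupp.single (cc n ℓ v) 1)]

lemma sum_sum_zmonExp_inner (T : TailSeq n ℓ m L s) {k : ℕ} (hkm : k ≤ m) :
    ∑ t ∈ Icc 1 k, ∑ u ∈ Icc 1 (s t - 1), zmonExp n ℓ L t u
      = arcVec (cc n ℓ) 2 (L k + 1) + arcVec (aa n ℓ) 1 (L k) := by
  induction k with
  | zero => simp [T.L_zero, arcVec]
  | succ k ih =>
    rw [Finset.sum_Icc_succ_top (by omega), ih (by omega), T.sum_zmonExp_inner (by omega) hkm,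
      Nat.add_sub_cancel]
    have h1 := T.one_le_L (t := k) (by omega)
    have h2 := T.L_mono k (k + 1) (by omega) hkm
    rw [add_add_add_comm, arcVec_add_arcVec _ (by omega) (by omega),
      arcVec_add_arcVec _ (by omega) h2]

/-- The exponent identity behind the quasiminor relation
`𝗓_{0,0}𝗓_{k+1,s_{k+1}} = 𝗓_{1,s_1}(∏_{t=1}^{k} W_t)𝗓_{k,0}`. -/
lemma zmonExp_quasiminor (T : TailSeq n ℓ m L s) {k : ℕ} (hk : 1 ≤ k) (hkm : k ≤ m) :
    zmonExp n ℓ L 0 0 + zmonExp n ℓ L (k + 1) (s (k + 1))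
      = zmonExp n ℓ L 1 (s 1) + ∑ t ∈ Icc 1 k, ∑ u ∈ Icc 1 (s t - 1), zmonExp n ℓ L t u
        + zmonExp n ℓ L k 0 := by
  have h1 := T.one_le_L hkm
  have h2 := T.L_le hkm
  have hc1 : Finsupp.single (cc n ℓ 1) 1 = arcVec (cc n ℓ) 1 2 := (arcVec_succ_self _ 1).symm
  rw [zmonExp_zero_row, T.zmonExp_succ_width hk hkm, T.zmonExp_width le_rfl (by omega),
    T.sum_sum_zmonExp_inner hkm, T.zmonExp_first hk hkm, Nat.sub_self, T.L_zero, kArr_zero,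
    ← arcVec_succ_self (cc n ℓ) 0, hc1,
    ← arcVec_add_arcVec (aa n ℓ) zero_le_one h1,
    ← arcVec_add_arcVec (cc n ℓ) (zero_le_one) (by omega : 1 ≤ n + 1),
    ← arcVec_add_arcVec (cc n ℓ) (by omega : 1 ≤ 2) (by omega : 2 ≤ n + 1),
    ← arcVec_add_arcVec (cc n ℓ) (by omega : 2 ≤ L k + 1) (by omega : L k + 1 ≤ n + 1)]
  ac_rfl

lemma zmonExp_aa_ne_zero_iff (T : TailSeq n ℓ m L s) {i j w : ℕ} (hi : i < m + 2)
    (hj : j < nj m s i) (hw : w ≤ n) :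
    zmonExp n ℓ L i j (aa n ℓ w) ≠ 0 ↔ i = m + 1 ∨ (1 ≤ i ∧ i ≤ m ∧ j = s i ∧ w < L (i - 1)) ∨
      (1 ≤ i ∧ i ≤ m ∧ 1 ≤ j ∧ j < s i ∧ w + j = L i) ∨ (i = m ∧ j = 0 ∧ w = n) := by
  have hm := T.m_eq
  rcases index_cases hi hj with ⟨rfl, rfl⟩ | ⟨rfl, rfl⟩ | ⟨hi1, him, rfl | rfl | ⟨hj1, hjs⟩⟩
  · simp only [zmonExp_zero_row, arcVec_cc_apply_aa, ne_self_iff_false, false_iff]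
    omega
  · simp only [T.zmonExp_last_row, arcVec_aa_apply_aa_ne_zero_iff le_rfl hw, true_or, iff_true]
    omega
  · simp only [T.zmonExp_first hi1 him, add_apply_ne_zero_iff, single_one_apply_ne_zero_iff,
      arcVec_cc_apply_aa, kArr_eq_aa_iff (by omega : i ≤ ℓ + 1) hw, cc_ne_aa, ne_self_iff_false,
      false_or, true_and]
    have hs := T.s_eq i hi1 him
    omega
  · have hL := T.L_le (t := i - 1) (by omega)
    simp only [T.zmonExp_width hi1 him, add_apply_ne_zero_iff, single_one_apply_ne_zero_iff,
      arcVec_aa_apply_aa_ne_zero_iff (by omega : L (i - 1) ≤ n + 1) hw,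
      kArr_eq_aa_iff (by omega : i - 1 ≤ ℓ + 1) hw, true_and]
    have hs := T.s_eq i hi1 him
    omega
  · have hL := T.L_le him
    have hL' := T.one_le_L (t := i - 1) (by omega)
    have hs := T.s_eq i hi1 him
    simp only [T.zmonExp_inner hi1 him hj1 hjs, add_apply_ne_zero_iff,
      single_one_apply_ne_zero_iff, cc_ne_aa, false_or,
      aa_injOn.eq_iff (show L i - j ∈ Set.Iio (n + 1) by simp; omega)
        (show w ∈ Set.Iio (n + 1) by simp; omega)]
    omega

lemma zmonExp_kArr_ne_zero_iff (T : TailSeq n ℓ m L s) {i j h : ℕ} (hi : i < m + 2)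
    (hj : j < nj m s i) (h1 : 1 ≤ h) (h2 : h ≤ ℓ) :
    zmonExp n ℓ L i j (kArr n ℓ h) ≠ 0 ↔
      (1 ≤ i ∧ i ≤ m ∧ j = 0 ∧ i = h) ∨ (1 ≤ i ∧ i ≤ m ∧ j = s i ∧ i = h + 1) := by
  have hm := T.m_eq
  rcases index_cases hi hj with ⟨rfl, rfl⟩ | ⟨rfl, rfl⟩ | ⟨hi1, him, rfl | rfl | ⟨hj1, hjs⟩⟩
  · simp only [zmonExp_zero_row, arcVec_cc_apply_kArr h1 h2, ne_self_iff_false, false_iff]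
    omega
  · simp only [T.zmonExp_last_row, arcVec_aa_apply_kArr h1 h2, ne_self_iff_false, false_iff]
    omega
  · simp only [T.zmonExp_first hi1 him, add_apply_ne_zero_iff, single_one_apply_ne_zero_iff,
      arcVec_cc_apply_kArr h1 h2, cc_ne_kArr h1 h2, kArr_eq_kArr_iff h1 h2 (by omega : i ≤ ℓ + 1),
      ne_self_iff_false, false_or, true_and]
    have hs := T.s_eq i hi1 him
    omega
  · simp only [T.zmonExp_width hi1 him, add_apply_ne_zero_iff, single_one_apply_ne_zero_iff,
      arcVec_aa_apply_kArr h1 h2, kArr_eq_kArr_iff h1 h2 (by omega : i - 1 ≤ ℓ + 1),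
      ne_self_iff_false, false_or, true_and]
    have hs := T.s_eq i hi1 him
    omega
  · simp only [T.zmonExp_inner hi1 him hj1 hjs, add_apply_ne_zero_iff,
      single_one_apply_ne_zero_iff, cc_ne_kArr h1 h2, aa_ne_kArr h1 h2, or_self, false_iff]
    omega

lemma zmonExp_cc_zero_ne_zero_iff (T : TailSeq n ℓ m L s) {i j : ℕ} (hi : i < m + 2)
    (hj : j < nj m s i) :
    zmonExp n ℓ L i j (cc n ℓ 0) ≠ 0 ↔ i = 0 ∨ (1 ≤ i ∧ i ≤ m ∧ j = 0) := by
  have hm := T.m_eq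
  rcases index_cases hi hj with ⟨rfl, rfl⟩ | ⟨rfl, rfl⟩ | ⟨hi1, him, rfl | rfl | ⟨hj1, hjs⟩⟩
  · simp only [zmonExp_zero_row, arcVec_cc_apply_cc_ne_zero_iff le_rfl (Nat.zero_le n), true_or,
      iff_true]
    omega
  · simp only [T.zmonExp_last_row, arcVec_aa_apply_cc, ne_self_iff_false, false_iff]
    omega
  · simp only [T.zmonExp_first hi1 him, add_apply_ne_zero_iff, single_one_apply_ne_zero_iff,
      true_or, and_true, true_iff]
    omega
  · simp only [T.zmonExp_width hi1 him, add_apply_ne_zero_iff, single_one_apply_ne_zero_iff,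
      arcVec_aa_apply_cc, kArr_ne_cc_zero T.one_le_n (by omega : i - 1 ≤ ℓ), ne_self_iff_false,
      or_self, false_iff]
    have hs := T.s_eq i hi1 him
    omega
  · have hL := T.L_le him
    have hn := T.one_le_n
    simp only [T.zmonExp_inner hi1 him hj1 hjs, add_apply_ne_zero_iff,
      single_one_apply_ne_zero_iff, aa_ne_cc, or_false,
      cc_injOn.eq_iff (show L i - j + 1 ∈ Set.Iio (n + 1) by simp; omega)
        (show 0 ∈ Set.Iio (n + 1) by simp)]
    omega

end TailSeq

noncomputable def zexp (n ℓ : ℕ) (L : ℕ → ℕ) {m : ℕ} {s : ℕ → ℕ} (p : ZIdx m s) :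
    Arrow n ℓ →₀ ℕ :=
  zmonExp n ℓ L p.1 p.2

lemma zexp_zidx {n ℓ m : ℕ} {L s : ℕ → ℕ} {i j : ℕ} (hi : i < m + 2) (hj : j < nj m s i) :
    zexp n ℓ L (zidx m s i j) = zmonExp n ℓ L i j := by
  rw [zidx_eq hi hj, zexp]

noncomputable def expCast (α : Type*) : (α →₀ ℕ) →+ (α → ℤ) :=
  Finsupp.coeFnAddHom.comp (Finsupp.mapRange.addMonoidHom (Nat.castAddMonoidHom ℤ))

lemma PhiMap_single_one {n ℓ m : ℕ} {s : ℕ → ℕ} (d : ZIdx m s → (Arrow n ℓ →₀ ℕ))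
    (p : ZIdx m s) : PhiMap n ℓ m s d (Finsupp.single p 1) = expCast _ (d p) := by
  ext q
  simp [PhiMap, expCast]

lemma PhiMap_apply {n ℓ m : ℕ} {s : ℕ → ℕ} (d : ZIdx m s → (Arrow n ℓ →₀ ℕ))
    (x : ZIdx m s →₀ ℤ) (q : Arrow n ℓ) :
    PhiMap n ℓ m s d x q = x.sum fun p c => c * d p q := by
  simp [PhiMap, Finsupp.lsum_apply, Finsupp.sum, Finset.sum_apply, mul_comm]

lemma apply_eq_zero_of_mem_ker_PhiMap {n ℓ m : ℕ} {s : ℕ → ℕ}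
    {d : ZIdx m s → (Arrow n ℓ →₀ ℕ)} {y : ZIdx m s →₀ ℤ}
    (hy : y ∈ LinearMap.ker (PhiMap n ℓ m s d)) {q : Arrow n ℓ} {p₀ : ZIdx m s}
    (h₀ : d p₀ q ≠ 0) (h : ∀ p ≠ p₀, d p q ≠ 0 → y p = 0) : y p₀ = 0 := by
  have hq := congrFun (LinearMap.mem_ker.mp hy) q
  rw [PhiMap_apply, Finsupp.sum, Finset.sum_eq_single p₀] at hq
  · simpa [h₀] using hq
  · intro p _ hp
    by_cases hd : d p q = 0
    · simp [hd]
    · simp [h p hp hd]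
  · simp_all

namespace TailSeq

variable {n ℓ m : ℕ} {L s : ℕ → ℕ} {y : ZIdx m s →₀ ℤ}

lemma apply_eq_zero_of_pivot (T : TailSeq n ℓ m L s)
    (hpiv : ∀ t, 2 ≤ t → t ≤ m + 1 → y (zidx m s t (s t)) = 0)
    {i j : ℕ} (hi : i < m + 2) (hj : j < nj m s i) (h2 : 2 ≤ i) (hjs : j = s i ∨ i = m + 1) :
    y ⟨⟨i, hi⟩, ⟨j, hj⟩⟩ = 0 := by
  obtain rfl : j = s i := by
    rcases hjs with h | rfl
    · exact h
    · simp only [nj, or_true, if_true] at hj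
      rw [T.s_last]
      omega
  rw [← zidx_eq hi hj]
  exact hpiv i h2 (by omega)

/-- Evaluating `Φ y = 0` at an arrow `q` that, among the non-pivot variables, only `z_{i₀,j₀}`
passes through, shows that `y` vanishes at `(i₀, j₀)`. -/
lemma eq_zero_of_isolated (T : TailSeq n ℓ m L s)
    (hy : y ∈ LinearMap.ker (PhiMap n ℓ m s (zexp n ℓ L)))
    (hpiv : ∀ t, 2 ≤ t → t ≤ m + 1 → y (zidx m s t (s t)) = 0) {q : Arrow n ℓ} {i₀ j₀ : ℕ}
    (hi₀ : i₀ < m + 2) (hj₀ : j₀ < nj m s i₀) (h₀ : zmonExp n ℓ L i₀ j₀ q ≠ 0)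
    (h : ∀ i j, i < m + 2 → j < nj m s i → zmonExp n ℓ L i j q ≠ 0 →
      (i = i₀ ∧ j = j₀) ∨ (2 ≤ i ∧ (j = s i ∨ i = m + 1))) :
    y (zidx m s i₀ j₀) = 0 := by
  rw [zidx_eq hi₀ hj₀]
  refine apply_eq_zero_of_mem_ker_PhiMap hy h₀ fun ⟨⟨i, hi⟩, ⟨j, hj⟩⟩ hp hd => ?_
  rcases h i j hi hj hd with ⟨rfl, rfl⟩ | ⟨h2, hjs⟩
  · exact absurd rfl hp
  · exact T.apply_eq_zero_of_pivot hpiv hi hj h2 hjs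

lemma apply_zidx_one_width_eq_zero (T : TailSeq n ℓ m L s)
    (hy : y ∈ LinearMap.ker (PhiMap n ℓ m s (zexp n ℓ L)))
    (hpiv : ∀ t, 2 ≤ t → t ≤ m + 1 → y (zidx m s t (s t)) = 0) :
    y (zidx m s 1 (s 1)) = 0 := by
  have hm := T.m_eq
  have h1 := T.row_bounds le_rfl (by omega)
  have hL0 := T.L_zero
  have hi₀ : 1 < m + 2 := by omega
  have hj₀ : s 1 < nj m s 1 := by omega
  refine T.eq_zero_of_isolated hy hpiv hi₀ hj₀
    ((T.zmonExp_aa_ne_zero_iff hi₀ hj₀ (Nat.zero_le n)).mpr (by omega)) fun i j hi hj hd => ?_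
  have hrow := T.row_bounds (i := i)
  have := (T.zmonExp_aa_ne_zero_iff hi hj (Nat.zero_le n)).mp hd
  grind

lemma apply_zidx_inner_eq_zero (T : TailSeq n ℓ m L s)
    (hy : y ∈ LinearMap.ker (PhiMap n ℓ m s (zexp n ℓ L)))
    (hpiv : ∀ t, 2 ≤ t → t ≤ m + 1 → y (zidx m s t (s t)) = 0)
    {t u : ℕ} (ht : 1 ≤ t) (htm : t ≤ m) (hu : 1 ≤ u) (hus : u < s t) :
    y (zidx m s t u) = 0 := by
  have hm := T.m_eq
  have h1 := T.row_bounds ht htm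
  have hL0 := T.L_zero
  have hi₀ : t < m + 2 := by omega
  have hj₀ : u < nj m s t := by omega
  have hw : L t - u ≤ n := by omega
  refine T.eq_zero_of_isolated hy hpiv hi₀ hj₀
    ((T.zmonExp_aa_ne_zero_iff hi₀ hj₀ hw).mpr (by omega)) fun i j hi hj hd => ?_
  have hrow := T.row_bounds (i := i)
  have hblock := T.eq_of_mem_block (i := i) (t := t) (w := L t - u)
  have := (T.zmonExp_aa_ne_zero_iff hi hj hw).mp hd
  grind

lemma apply_zidx_m_first_eq_zero (T : TailSeq n ℓ m L s)
    (hy : y ∈ LinearMap.ker (PhiMap n ℓ m s (zexp n ℓ L)))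
    (hpiv : ∀ t, 2 ≤ t → t ≤ m + 1 → y (zidx m s t (s t)) = 0) :
    y (zidx m s m 0) = 0 := by
  have hm := T.m_eq
  have h1 := T.row_bounds (i := m) (by omega) le_rfl
  have hi₀ : m < m + 2 := by omega
  have hj₀ : 0 < nj m s m := by omega
  refine T.eq_zero_of_isolated hy hpiv hi₀ hj₀
    ((T.zmonExp_aa_ne_zero_iff hi₀ hj₀ le_rfl).mpr (by omega)) fun i j hi hj hd => ?_
  have hrow := T.row_bounds (i := i)
  have := (T.zmonExp_aa_ne_zero_iff hi hj le_rfl).mp hd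
  grind

lemma apply_zidx_first_eq_zero (T : TailSeq n ℓ m L s)
    (hy : y ∈ LinearMap.ker (PhiMap n ℓ m s (zexp n ℓ L)))
    (hpiv : ∀ t, 2 ≤ t → t ≤ m + 1 → y (zidx m s t (s t)) = 0)
    {h : ℕ} (h1 : 1 ≤ h) (h2 : h ≤ ℓ) :
    y (zidx m s h 0) = 0 := by
  have hm := T.m_eq
  have hh := T.row_bounds (i := h) h1 (by omega)
  have hi₀ : h < m + 2 := by omega
  have hj₀ : 0 < nj m s h := by omega
  refine T.eq_zero_of_isolated hy hpiv hi₀ hj₀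
    ((T.zmonExp_kArr_ne_zero_iff hi₀ hj₀ h1 h2).mpr (by omega)) fun i j hi hj hd => ?_
  have := (T.zmonExp_kArr_ne_zero_iff hi hj h1 h2).mp hd
  omega

lemma apply_zidx_zero_zero_eq_zero (T : TailSeq n ℓ m L s)
    (hy : y ∈ LinearMap.ker (PhiMap n ℓ m s (zexp n ℓ L)))
    (hrows : ∀ i, 1 ≤ i → i ≤ m → y (zidx m s i 0) = 0) :
    y (zidx m s 0 0) = 0 := by
  have hj₀ : 0 < nj m s 0 := by simp [nj]
  rw [zidx_eq (by omega) hj₀]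
  refine apply_eq_zero_of_mem_ker_PhiMap hy (q := cc n ℓ 0)
    ((T.zmonExp_cc_zero_ne_zero_iff (by omega) hj₀).mpr (.inl rfl))
    fun ⟨⟨i, hi⟩, ⟨j, hj⟩⟩ hp hd => ?_
  rcases (T.zmonExp_cc_zero_ne_zero_iff hi hj).mp hd with rfl | ⟨h1, h2, rfl⟩
  · obtain rfl : j = 0 := by simpa [nj] using hj
    exact absurd rfl hp
  · rw [← zidx_eq hi hj]
    exact hrows i h1 h2

theorem eq_zero_of_mem_ker (T : TailSeq n ℓ m L s)
    (hy : y ∈ LinearMap.ker (PhiMap n ℓ m s (zexp n ℓ L)))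
    (hpiv : ∀ t, 2 ≤ t → t ≤ m + 1 → y (zidx m s t (s t)) = 0) : y = 0 := by
  have hm := T.m_eq
  have hrows : ∀ i, 1 ≤ i → i ≤ m → y (zidx m s i 0) = 0 := fun i h1 h2 => by
    rcases Nat.lt_or_ge i m with hlt | hge
    · exact T.apply_zidx_first_eq_zero hy hpiv h1 (by omega)
    · obtain rfl : i = m := le_antisymm h2 hge
      exact T.apply_zidx_m_first_eq_zero hy hpiv
  ext ⟨⟨i, hi⟩, ⟨j, hj⟩⟩
  rw [Finsupp.zero_apply, ← zidx_eq hi hj]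
  rcases index_cases hi hj with ⟨rfl, rfl⟩ | ⟨rfl, rfl⟩ | ⟨hi1, him, rfl | rfl | ⟨hj1, hjs⟩⟩
  · exact T.apply_zidx_zero_zero_eq_zero hy hrows
  · simpa [T.s_last] using hpiv (m + 1) (by omega) le_rfl
  · exact hrows i hi1 him
  · rcases Nat.lt_or_ge i 2 with hlt | hge
    · obtain rfl : i = 1 := by omega
      exact T.apply_zidx_one_width_eq_zero hy hpiv
    · exact hpiv i hge (by omega)
  · exact T.apply_zidx_inner_eq_zero hy hpiv hi1 him hj1 hjs

lemma PhiMap_vRel (T : TailSeq n ℓ m L s) {j : ℕ} (hj2 : 2 ≤ j) (hjm : j ≤ m + 1) :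
    PhiMap n ℓ m s (zexp n ℓ L) (vRel m s j) = 0 := by
  obtain ⟨k, rfl⟩ : ∃ k, j = k + 1 := ⟨j - 1, by omega⟩
  have hm := T.m_eq
  have hrel := congrArg (expCast _) (T.zmonExp_quasiminor (k := k) (by omega) (by omega))
  have hinner : ∑ t ∈ Icc 1 k, ∑ u ∈ Icc 1 (s t - 1),
      expCast _ (zexp n ℓ L (zidx m s t u))
      = ∑ t ∈ Icc 1 k, ∑ u ∈ Icc 1 (s t - 1), expCast _ (zmonExp n ℓ L t u) := by
    refine Finset.sum_congr rfl fun t ht => Finset.sum_congr rfl fun u hu => ?_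
    rw [mem_Icc] at ht hu
    rw [zexp_zidx (by omega) (T.lt_nj ht.1 (by omega) (by omega))]
  simp only [map_add, map_sum] at hrel
  simp only [vRel, Nat.add_one_sub_one, map_sub, map_add, map_sum, PhiMap_single_one, hinner,
    zexp_zidx (by omega : 0 < m + 2) (by simp [nj] : 0 < nj m s 0),
    zexp_zidx (by omega : k + 1 < m + 2) (T.lt_nj (by omega) hjm le_rfl),
    zexp_zidx (by omega : 1 < m + 2) (T.lt_nj le_rfl (by omega) le_rfl),
    zexp_zidx (by omega : k < m + 2) (T.lt_nj (by omega) (by omega) (Nat.zero_le _))]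
  rw [sub_sub, sub_sub, sub_eq_zero, hrel, add_assoc]

lemma vRel_apply_pivot (T : TailSeq n ℓ m L s) {j t : ℕ} (hj2 : 2 ≤ j) (hjm : j ≤ m + 1)
    (ht2 : 2 ≤ t) (htm : t ≤ m + 1) :
    vRel m s j (zidx m s t (s t)) = if j = t then 1 else 0 := by
  have hs : ∀ i, 1 ≤ i → i ≤ m → s i = L i - L (i - 1) + 1 := T.s_eq
  have hlast := T.s_last
  have hvalid : ∀ a b, 1 ≤ a → a ≤ m + 1 → b ≤ s a → b < nj m s a := fun a b h1 h2 h3 =>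
    T.lt_nj h1 h2 h3
  have hsingle : ∀ a b, a < m + 2 → b < nj m s a →
      Finsupp.single (zidx m s a b) (1 : ℤ) (zidx m s t (s t))
        = if a = t ∧ b = s t then 1 else 0 := fun a b ha hb => by
    simp only [Finsupp.single_apply,
      zidx_inj ha hb (by omega) (hvalid t (s t) (by omega) htm le_rfl)]
  have hinner : ∑ t' ∈ Icc 1 (j - 1), ∑ u ∈ Icc 1 (s t' - 1),
      Finsupp.single (zidx m s t' u) (1 : ℤ) (zidx m s t (s t)) = 0 := by
    refine Finset.sum_eq_zero fun t' ht' => Finset.sum_eq_zero fun u hu => ?_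
    rw [mem_Icc] at ht' hu
    rw [hsingle t' u (by omega) (hvalid t' u ht'.1 (by omega) (by omega))]
    have := hs t' ht'.1 (by omega)
    grind
  simp only [vRel, Finsupp.coe_sub, Finsupp.coe_add, Pi.sub_apply, Pi.add_apply,
    Finsupp.finsetSum_apply, hinner,
    hsingle 0 0 (by omega) (by simp [nj]),
    hsingle j (s j) (by omega) (hvalid j (s j) (by omega) hjm le_rfl),
    hsingle 1 (s 1) (by omega) (hvalid 1 (s 1) le_rfl (by omega) le_rfl),
    hsingle (j - 1) 0 (by omega) (hvalid (j - 1) 0 (by omega) (by omega) (Nat.zero_le _))]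
  have := hs t
  grind

theorem ker_PhiMap_eq_span (T : TailSeq n ℓ m L s) :
    LinearMap.ker (PhiMap n ℓ m s (zexp n ℓ L))
      = Submodule.span ℤ {v | ∃ j : ℕ, 2 ≤ j ∧ j ≤ m + 1 ∧ v = vRel m s j} := by
  have hset : {v | ∃ j : ℕ, 2 ≤ j ∧ j ≤ m + 1 ∧ v = vRel m s j}
      = vRel m s '' ↑(Icc 2 (m + 1)) := by
    ext v
    simp [and_assoc, eq_comm]
  rw [hset]
  refine LinearMap.ker_eq_span_image_of_pivots _ _ _ (fun t => zidx m s t (s t))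
    (fun j hj => ?_) (fun j hj k hk => ?_) (fun y hy hpiv => ?_)
  · rw [mem_Icc] at hj
    exact T.PhiMap_vRel hj.1 hj.2
  · rw [mem_Icc] at hj hk
    exact T.vRel_apply_pivot hj.1 hj.2 hk.1 hk.2
  · exact T.eq_zero_of_mem_ker hy fun t h2 h3 => hpiv t (mem_Icc.mpr ⟨h2, h3⟩)

end TailSeq

theorem kernel_of_exponent_map_generated_by_quasiminor_vectors_general
    -- Hirzebruch–Jung expansions r/a = [α_1,…,α_n], r/(r−a) = [β_1,…,β_m]
    (n m ℓ : ℕ) (βs : List ℕ)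
    (hβlen : βs.length = m)
    -- ℓ = Σ(α_i − 2), e = ℓ + 3 = m + 2
    (hm : m = ℓ + 1)
    -- l_h = tail vertex of k_h: weakly increasing, l_0 = 1, l_{ℓ+1} = n, with
    -- α_i − 2 of the extra arrows having tail i; Riemenschneider duality
    (L : ℕ → ℕ) (hL0 : L 0 = 1) (hLtop : L (ℓ + 1) = n)
    (hLmono : ∀ h₁ h₂, h₁ ≤ h₂ → h₂ ≤ ℓ + 1 → L h₁ ≤ L h₂)
    (hdual : ∀ t, 1 ≤ t → t ≤ m → βs.getD (t - 1) 0 = L t - L (t - 1) + 2) :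
    (∃! d : ZIdx m (fun t => βs.getD (t - 1) 0 - 1) → (Arrow n ℓ →₀ ℕ),
      ∀ p : ZIdx m (fun t => βs.getD (t - 1) 0 - 1),
        zmon n ℓ L p.1.val p.2.val = monomial (d p) (1 : ℂ)) ∧
    (∀ d : ZIdx m (fun t => βs.getD (t - 1) 0 - 1) → (Arrow n ℓ →₀ ℕ),
      (∀ p : ZIdx m (fun t => βs.getD (t - 1) 0 - 1),
        zmon n ℓ L p.1.val p.2.val = monomial (d p) (1 : ℂ)) →
      LinearMap.ker (PhiMap n ℓ m (fun t => βs.getD (t - 1) 0 - 1) d) =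
        Submodule.span ℤ
          {v | ∃ j : ℕ, 2 ≤ j ∧ j ≤ m + 1 ∧
            v = vRel m (fun t => βs.getD (t - 1) 0 - 1) j}) := by
  have T : TailSeq n ℓ m L (fun t => βs.getD (t - 1) 0 - 1) :=
    { m_eq := hm
      L_zero := hL0
      L_last := hm ▸ hLtop
      L_mono := fun a b hab hb => hLmono a b hab (hm ▸ hb)
      s_eq := fun t h1 h2 => by simp only [hdual t h1 h2]; omega
      s_last := by simp [hβlen] }
  have hz : ∀ p : ZIdx m (fun t => βs.getD (t - 1) 0 - 1),
      zmon n ℓ L p.1.val p.2.val = monomial (zexp n ℓ L p) 1 :=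
    fun p => zmon_eq_monomial_zmonExp _ _
  have huniq : ∀ d : ZIdx m (fun t => βs.getD (t - 1) 0 - 1) → (Arrow n ℓ →₀ ℕ),
      (∀ p, zmon n ℓ L p.1.val p.2.val = monomial (d p) (1 : ℂ)) → d = zexp n ℓ L :=
    fun d hd => funext fun p => monomial_left_injective one_ne_zero ((hd p).symm.trans (hz p))
  refine ⟨⟨zexp n ℓ L, hz, huniq⟩, fun d hd => ?_⟩
  rw [huniq d hd]
  exact T.ker_PhiMap_eq_span

/-- each `z_{i,j}` is a monomial `x^{d_{i,j}}` for a unique exponent vector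
`d_{i,j} : Q_1 → ℕ`, and the kernel of the induced ℤ-linear map `Φ` is generated as an
abelian group by the `m` vectors `v_j`, `2 ≤ j ≤ m+1`. -/
theorem kernel_of_exponent_map_generated_by_quasiminor_vectors
    -- the group 1/r(1,a) with r > a ≥ 1 coprime
    (r a : ℕ) (ha : 1 ≤ a) (hra : a < r) (hcop : Nat.Coprime r a)
    -- Hirzebruch–Jung expansions r/a = [α_1,…,α_n], r/(r−a) = [β_1,…,β_m]
    (n m ℓ : ℕ) (αs βs : List ℕ) (hn1 : 1 ≤ n)
    (hαlen : αs.length = n) (hα2 : ∀ x ∈ αs, 2 ≤ x)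
    (hαcf : hjcf (αs.map (fun x => (x : ℚ))) = (r : ℚ) / (a : ℚ))
    (hβlen : βs.length = m) (hβ2 : ∀ x ∈ βs, 2 ≤ x)
    (hβcf : hjcf (βs.map (fun x => (x : ℚ))) = (r : ℚ) / ((r : ℚ) - (a : ℚ)))
    -- ℓ = Σ(α_i − 2), e = ℓ + 3 = m + 2
    (hl : ℓ = ∑ i ∈ Finset.range n, (αs.getD i 0 - 2))
    (hm : m = ℓ + 1)
    -- l_h = tail vertex of k_h: weakly increasing, l_0 = 1, l_{ℓ+1} = n, with
    -- α_i − 2 of the extra arrows having tail i; Riemenschneider duality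
    (L : ℕ → ℕ) (hL0 : L 0 = 1) (hLtop : L (ℓ + 1) = n)
    (hLmono : ∀ h₁ h₂, h₁ ≤ h₂ → h₂ ≤ ℓ + 1 → L h₁ ≤ L h₂)
    (hLrange : ∀ h, 1 ≤ h → h ≤ ℓ → 1 ≤ L h ∧ L h ≤ n)
    (hmult : ∀ i, 1 ≤ i → i ≤ n →
      ((Finset.Icc 1 ℓ).filter (fun h => L h = i)).card = αs.getD (i - 1) 0 - 2)
    (hdual : ∀ t, 1 ≤ t → t ≤ m → βs.getD (t - 1) 0 = L t - L (t - 1) + 2) :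
    (∃! d : ZIdx m (fun t => βs.getD (t - 1) 0 - 1) → (Arrow n ℓ →₀ ℕ),
      ∀ p : ZIdx m (fun t => βs.getD (t - 1) 0 - 1),
        zmon n ℓ L p.1.val p.2.val = monomial (d p) (1 : ℂ)) ∧
    (∀ d : ZIdx m (fun t => βs.getD (t - 1) 0 - 1) → (Arrow n ℓ →₀ ℕ),
      (∀ p : ZIdx m (fun t => βs.getD (t - 1) 0 - 1),
        zmon n ℓ L p.1.val p.2.val = monomial (d p) (1 : ℂ)) →
      LinearMap.ker (PhiMap n ℓ m (fun t => βs.getD (t - 1) 0 - 1) d) =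
        Submodule.span ℤ
          {v | ∃ j : ℕ, 2 ≤ j ∧ j ≤ m + 1 ∧
            v = vRel m (fun t => βs.getD (t - 1) 0 - 1) j}) :=
  kernel_of_exponent_map_generated_by_quasiminor_vectors_general n m ℓ βs hβlen hm L hL0 hLtop
    hLmono hdual
end

section
/- Assume a > 1 and λ ∈ Δ. The map x ↦ (x(c_{1,0}), x(a_{0,1})) is a bijection from the set of λ-representations x : Q_1 → ℂ satisfying x(c_{0,n}) = x(c_{n,n−1}) = ⋯ = x(c_{2,1}) = 1 onto ℂ². (This is the chart W_0 of the moduli space of the deformed reconstruction algebra A_{r,a,λ}, and it is isomorphic to affine 2-space.) -/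
/-- `x(C_{0,j})`: the value of `x` on the clockwise path from `0` to `j` (for `j ≥ 1`). -/
def xcPath (n ℓ : ℕ) (x : Arrow n ℓ → ℂ) (j : ℕ) : ℂ :=
  x (cc n ℓ 0) * ∏ v ∈ Finset.Icc (j + 1) n, x (cc n ℓ v)

/-- `x(A_{0,j})`: the value of `x` on the anticlockwise path from `0` to `j` (for `j ≥ 1`). -/
def xaPath (n ℓ : ℕ) (x : Arrow n ℓ → ℂ) (j : ℕ) : ℂ :=
  ∏ v ∈ Finset.range j, x (aa n ℓ v)

/-- A `λ`-representation of dimension vector `(1,…,1)`: a function `x : Q_1 → ℂ` satisfying,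
for each `1 ≤ i ≤ e−2 = ℓ+1` (writing `d_i = l_i − l_{i−1}`), the step-`i` relations of the
deformed reconstruction algebra `A_{r,a,λ}`. -/
def IsLamRep (n ℓ : ℕ) (L : ℕ → ℕ) (β : ℕ → ℕ) (lam : ℕ → ℕ → ℂ)
    (x : Arrow n ℓ → ℂ) : Prop :=
  ∀ i, 1 ≤ i → i ≤ ℓ + 1 →
    ((L i - L (i - 1) = 0 →
      x (kArr n ℓ i) * xcPath n ℓ x (L i)
          - x (kArr n ℓ (i - 1)) * xaPath n ℓ x (L (i - 1)) = lam i 1 ∧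
      xaPath n ℓ x (L (i - 1)) * x (kArr n ℓ (i - 1))
          - xcPath n ℓ x (L i) * x (kArr n ℓ i) = lam i 0) ∧
    (0 < L i - L (i - 1) →
      (x (kArr n ℓ i) * xcPath n ℓ x (L i)
          - x (cc n ℓ (L i)) * x (aa n ℓ (L i - 1)) = lam i (β i - 1)) ∧
      (∀ u, L (i - 1) + 1 ≤ u → u ≤ L i - 1 →
        x (aa n ℓ u) * x (cc n ℓ (u + 1)) - x (cc n ℓ u) * x (aa n ℓ (u - 1))
          = lam i (u - L (i - 1) + 1)) ∧
      (x (aa n ℓ (L (i - 1))) * x (cc n ℓ (L (i - 1) + 1))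
          - x (kArr n ℓ (i - 1)) * xaPath n ℓ x (L (i - 1)) = lam i 1) ∧
      (xaPath n ℓ x (L (i - 1)) * x (kArr n ℓ (i - 1))
          - xcPath n ℓ x (L i) * x (kArr n ℓ i) = lam i 0)))

/-- `λ ∈ Δ`: all the row sums `Σ_{j=0}^{β_i−1} λ_{i,j}` vanish. -/
def InDelta (ℓ : ℕ) (β : ℕ → ℕ) (lam : ℕ → ℕ → ℂ) : Prop :=
  ∀ i, 1 ≤ i → i ≤ ℓ + 1 → ∑ j ∈ Finset.range (β i), lam i j = 0


/-! On the chart all clockwise arrows except `c_{1,0}` are `1`, so the relations of step `i` are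
solved for `x(k_i)` and for the `x(a_u)`, `l_{i-1} ≤ u < l_i`, in terms of `x(k_{i-1})` and
`x(A_{0,l_{i-1}})`: the anticlockwise values in a block are partial sums of a row of `λ` shifted
by `x(k_{i-1}) x(A_{0,l_{i-1}})`. Starting from `(x(c_{1,0}), x(a_{0,1})) = (p, q)` this determines
the representation block by block. Conversely the values so obtained satisfy all relations: the
only one not used to define them, the last of each block, holds because the row sums of `λ`
vanish. -/

namespace ChartW0

structure IsTailSequence (n ℓ : ℕ) (L : ℕ → ℕ) : Prop where
  zero : L 0 = 1
  top : L (ℓ + 1) = n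
  monotoneOn : MonotoneOn L (Set.Iic (ℓ + 1))

def OnChart {n ℓ : ℕ} (x : Arrow n ℓ → ℂ) : Prop :=
  x (cc n ℓ 0) = 1 ∧ ∀ v, 2 ≤ v → v ≤ n → x (cc n ℓ v) = 1

def rowPartialSum (lam : ℕ → ℕ → ℂ) (i t : ℕ) : ℂ :=
  ∑ j ∈ Finset.range t, lam i (j + 1)

/-- The relations of step `i + 1`, solved on the chart for `x(k_{i+1})` and the `x(a_u)` with
`l_i ≤ u < l_{i+1}`. -/
def ChartRecurrence {n ℓ : ℕ} (L : ℕ → ℕ) (lam : ℕ → ℕ → ℂ) (x : Arrow n ℓ → ℂ) (i : ℕ) :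
    Prop :=
  x (kArr n ℓ (i + 1)) = xaPath n ℓ x (L i) * x (kArr n ℓ i) - lam (i + 1) 0 ∧
  ∀ u, L i ≤ u → u < L (i + 1) →
    x (aa n ℓ u) = x (kArr n ℓ i) * xaPath n ℓ x (L i) + rowPartialSum lam (i + 1) (u - L i + 1)

section Arrows

variable {n ℓ : ℕ}

theorem cc_val (v : Fin (n + 1)) : cc n ℓ v.val = Sum.inl v := by
  simp [cc, Fin.cast_val_eq_self]

theorem aa_val (v : Fin (n + 1)) : aa n ℓ v.val = Sum.inr (Sum.inl v) := by
  simp [aa, Fin.cast_val_eq_self]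

theorem kArr_zero : kArr n ℓ 0 = cc n ℓ 1 := by
  simp [kArr]

theorem kArr_succ_val (h : Fin ℓ) : kArr n ℓ (h.val + 1) = Sum.inr (Sum.inr h) := by
  rw [kArr, dif_pos ⟨by omega, h.isLt⟩]
  rfl

theorem kArr_top : kArr n ℓ (ℓ + 1) = aa n ℓ n := by
  simp [kArr]

theorem funext_arrow {x y : Arrow n ℓ → ℂ} (hc : ∀ v ≤ n, x (cc n ℓ v) = y (cc n ℓ v))
    (ha : ∀ u < n, x (aa n ℓ u) = y (aa n ℓ u))
    (hk : ∀ h, 1 ≤ h → h ≤ ℓ + 1 → x (kArr n ℓ h) = y (kArr n ℓ h)) : x = y := by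
  funext e
  rcases e with v | v | h
  · rw [← cc_val, hc v.val (Nat.lt_succ_iff.mp v.isLt)]
  · rw [← aa_val]
    rcases (Nat.lt_succ_iff.mp v.isLt).lt_or_eq with hv | hv
    · exact ha v.val hv
    · rw [hv, ← kArr_top, hk (ℓ + 1) (by omega) le_rfl]
  · rw [← kArr_succ_val, hk (h.val + 1) (by omega) (by omega)]

theorem xcPath_eq_one {x : Arrow n ℓ → ℂ} (hx : OnChart x) {j : ℕ} (hj : 1 ≤ j) :
    xcPath n ℓ x j = 1 := by
  rw [xcPath, hx.1, one_mul]
  exact Finset.prod_eq_one fun v hv => hx.2 v (by simp at hv; omega) (Finset.mem_Icc.mp hv).2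

theorem xaPath_congr {x y : Arrow n ℓ → ℂ} {j : ℕ} (h : ∀ u < j, x (aa n ℓ u) = y (aa n ℓ u)) :
    xaPath n ℓ x j = xaPath n ℓ y j :=
  Finset.prod_congr rfl fun u hu => h u (Finset.mem_range.mp hu)

theorem xaPath_eq_mul_prod_Ico (x : Arrow n ℓ → ℂ) {j k : ℕ} (hjk : j ≤ k) :
    xaPath n ℓ x k = xaPath n ℓ x j * ∏ u ∈ Finset.Ico j k, x (aa n ℓ u) := by
  simp only [xaPath, Finset.range_eq_Ico]
  exact (Finset.prod_Ico_consecutive _ (Nat.zero_le j) hjk).symm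

end Arrows

namespace IsTailSequence

variable {n ℓ : ℕ} {L : ℕ → ℕ}

theorem mono (hL : IsTailSequence n ℓ L) {i j : ℕ} (hij : i ≤ j) (hj : j ≤ ℓ + 1) :
    L i ≤ L j :=
  hL.monotoneOn (Set.mem_Iic.mpr (hij.trans hj)) (Set.mem_Iic.mpr hj) hij

theorem one_le (hL : IsTailSequence n ℓ L) {i : ℕ} (hi : i ≤ ℓ + 1) : 1 ≤ L i :=
  hL.zero ▸ hL.mono (Nat.zero_le i) hi

theorem le_top (hL : IsTailSequence n ℓ L) {i : ℕ} (hi : i ≤ ℓ + 1) : L i ≤ n :=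
  hL.top ▸ hL.mono hi le_rfl

theorem one_le_n (hL : IsTailSequence n ℓ L) : 1 ≤ n :=
  (hL.one_le le_rfl).trans (hL.le_top le_rfl)

end IsTailSequence

theorem rowPartialSum_succ (lam : ℕ → ℕ → ℂ) (i t : ℕ) :
    rowPartialSum lam i (t + 1) = rowPartialSum lam i t + lam i (t + 1) :=
  Finset.sum_range_succ _ _

theorem rowPartialSum_one (lam : ℕ → ℕ → ℂ) (i : ℕ) : rowPartialSum lam i 1 = lam i 1 := by
  simp [rowPartialSum]

theorem rowPartialSum_eq_neg {ℓ : ℕ} {L β : ℕ → ℕ} {lam : ℕ → ℕ → ℂ}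
    (hβ : ∀ i, 1 ≤ i → i ≤ ℓ + 1 → β i = L i - L (i - 1) + 2)
    (hlam : InDelta ℓ β lam) {i : ℕ} (hi : i ≤ ℓ) :
    rowPartialSum lam (i + 1) (L (i + 1) - L i + 1) = -lam (i + 1) 0 := by
  have h := hlam (i + 1) (by omega) (by omega)
  rw [hβ (i + 1) (by omega) (by omega), Nat.add_sub_cancel, Finset.sum_range_succ'] at h
  rw [rowPartialSum]
  linear_combination h

section Relations

variable {n ℓ : ℕ} {L : ℕ → ℕ} {β : ℕ → ℕ} {lam : ℕ → ℕ → ℂ} {x : Arrow n ℓ → ℂ}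

theorem chartRecurrence_of_isLamRep (hL : IsTailSequence n ℓ L)
    (hx : IsLamRep n ℓ L β lam x) (hc : OnChart x) {i : ℕ} (hi : i ≤ ℓ) :
    ChartRecurrence L lam x i := by
  have hrel := hx (i + 1) (by omega) (by omega)
  simp only [Nat.add_sub_cancel] at hrel
  have hC : xcPath n ℓ x (L (i + 1)) = 1 := xcPath_eq_one hc (hL.one_le (by omega))
  have hmono : L i ≤ L (i + 1) := hL.mono (by omega) (by omega)
  have htop : L (i + 1) ≤ n := hL.le_top (by omega)
  have h1 : 1 ≤ L i := hL.one_le (by omega)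
  rcases Nat.eq_zero_or_pos (L (i + 1) - L i) with hd | hd
  · obtain ⟨-, h0⟩ := hrel.1 hd
    exact ⟨by rw [hC] at h0; linear_combination -h0, fun u hu1 hu2 => by omega⟩
  obtain ⟨-, hmid, hfirst, h0⟩ := hrel.2 hd
  refine ⟨by rw [hC] at h0; linear_combination -h0, fun u hu => ?_⟩
  induction u, hu using Nat.le_induction with
  | base =>
    intro _
    rw [hc.2 (L i + 1) (by omega) (by omega)] at hfirst
    rw [Nat.sub_self, rowPartialSum_one]
    linear_combination hfirst
  | succ u hu ih =>
    intro hu'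
    have h := hmid (u + 1) (by omega) (by omega)
    rw [hc.2 (u + 1 + 1) (by omega) (by omega), hc.2 (u + 1) (by omega) (by omega),
      Nat.add_sub_cancel, show u + 1 - L i + 1 = u - L i + 1 + 1 by omega,
      ih (by omega)] at h
    rw [show u + 1 - L i + 1 = u - L i + 1 + 1 by omega, rowPartialSum_succ]
    linear_combination h

theorem isLamRep_of_chartRecurrence (hL : IsTailSequence n ℓ L)
    (hβ : ∀ i, 1 ≤ i → i ≤ ℓ + 1 → β i = L i - L (i - 1) + 2) (hlam : InDelta ℓ β lam)
    (hc : OnChart x) (hx : ∀ i ≤ ℓ, ChartRecurrence L lam x i) : IsLamRep n ℓ L β lam x := by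
  intro i hi1 hi2
  obtain ⟨i, rfl⟩ : ∃ j, i = j + 1 := ⟨i - 1, by omega⟩
  simp only [Nat.add_sub_cancel]
  obtain ⟨hk, ha⟩ := hx i (by omega)
  have hrow := rowPartialSum_eq_neg hβ hlam (i := i) (by omega)
  have hC : xcPath n ℓ x (L (i + 1)) = 1 := xcPath_eq_one hc (hL.one_le (by omega))
  have hmono : L i ≤ L (i + 1) := hL.mono (by omega) (by omega)
  have htop : L (i + 1) ≤ n := hL.le_top (by omega)
  have h1 : 1 ≤ L i := hL.one_le (by omega)
  rw [hC, hk]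
  refine ⟨fun hd => ?_, fun hd => ⟨?_, fun u hu1 hu2 => ?_, ?_, by ring⟩⟩
  · rw [hd, rowPartialSum_one] at hrow
    exact ⟨by linear_combination -hrow, by ring⟩
  · have hβi : β (i + 1) - 1 = L (i + 1) - L i + 1 := by
      rw [hβ (i + 1) (by omega) (by omega), Nat.add_sub_cancel]; omega
    rw [hβi, ha (L (i + 1) - 1) (by omega) (by omega), hc.2 _ (by omega) htop,
      show L (i + 1) - 1 - L i + 1 = L (i + 1) - L i by omega]
    rw [rowPartialSum_succ] at hrow
    linear_combination -hrow
  · rw [ha u (by omega) (by omega), ha (u - 1) (by omega) (by omega),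
      hc.2 (u + 1) (by omega) (by omega), hc.2 u (by omega) (by omega),
      show u - 1 - L i + 1 = u - L i by omega, rowPartialSum_succ]
    ring
  · rw [ha (L i) le_rfl (by omega), hc.2 (L i + 1) (by omega) (by omega), Nat.sub_self,
      rowPartialSum_one]
    ring

end Relations

section Uniqueness

variable {n ℓ : ℕ} {L : ℕ → ℕ} {lam : ℕ → ℕ → ℂ}

theorem eq_of_chartRecurrence (hL : IsTailSequence n ℓ L) {x y : Arrow n ℓ → ℂ}
    (hcx : OnChart x) (hcy : OnChart y)
    (hx : ∀ i ≤ ℓ, ChartRecurrence L lam x i) (hy : ∀ i ≤ ℓ, ChartRecurrence L lam y i)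
    (h1 : x (cc n ℓ 1) = y (cc n ℓ 1)) (h0 : x (aa n ℓ 0) = y (aa n ℓ 0)) : x = y := by
  have key : ∀ i ≤ ℓ + 1,
      x (kArr n ℓ i) = y (kArr n ℓ i) ∧ ∀ u < L i, x (aa n ℓ u) = y (aa n ℓ u) := by
    intro i
    induction i with
    | zero =>
      intro _
      refine ⟨by rw [kArr_zero, h1], fun u hu => ?_⟩
      rw [hL.zero, Nat.lt_one_iff] at hu
      rw [hu, h0]
    | succ i ih =>
      intro hi
      obtain ⟨hk, ha⟩ := ih (by omega)
      obtain ⟨hxk, hxa⟩ := hx i (by omega)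
      obtain ⟨hyk, hya⟩ := hy i (by omega)
      have hA : xaPath n ℓ x (L i) = xaPath n ℓ y (L i) := xaPath_congr ha
      refine ⟨by rw [hxk, hyk, hk, hA], fun u hu => ?_⟩
      rcases lt_or_ge u (L i) with hui | hui
      · exact ha u hui
      · rw [hxa u hui hu, hya u hui hu, hk, hA]
  refine funext_arrow (fun v hv => ?_) (fun u hu => ?_) (fun h _ hh => (key h hh).1)
  · rcases Nat.lt_or_ge v 2 with hv2 | hv2
    · interval_cases v
      exacts [hcx.1.trans hcy.1.symm, h1]
    · rw [hcx.2 v hv2 hv, hcy.2 v hv2 hv]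
  · exact (key (ℓ + 1) le_rfl).2 u (hL.top ▸ hu)

end Uniqueness

section Construction

/-- `(x(k_i), x(A_{0,l_i}))` for the chart point `(p, q)`, computed block by block. -/
def chartPair (L : ℕ → ℕ) (lam : ℕ → ℕ → ℂ) (p q : ℂ) : ℕ → ℂ × ℂ
  | 0 => (p, q)
  | i + 1 =>
    ((chartPair L lam p q i).2 * (chartPair L lam p q i).1 - lam (i + 1) 0,
      (chartPair L lam p q i).2 * ∏ u ∈ Finset.Ico (L i) (L (i + 1)),
        ((chartPair L lam p q i).1 * (chartPair L lam p q i).2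
          + rowPartialSum lam (i + 1) (u - L i + 1)))

def blockValue (L : ℕ → ℕ) (lam : ℕ → ℕ → ℂ) (p q : ℂ) (i u : ℕ) : ℂ :=
  (chartPair L lam p q i).1 * (chartPair L lam p q i).2 + rowPartialSum lam (i + 1) (u - L i + 1)

/-- A vertex `0 < u < n` lies in block `i + 1` for the largest `i ≤ ℓ` with `l_i ≤ u`. -/
def chartRep (n ℓ : ℕ) (L : ℕ → ℕ) (lam : ℕ → ℕ → ℂ) (p q : ℂ) : Arrow n ℓ → ℂ
  | Sum.inl v => if v.val = 1 then p else 1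
  | Sum.inr (Sum.inl v) =>
    if v.val = 0 then q
    else if v.val = n then (chartPair L lam p q (ℓ + 1)).1
    else blockValue L lam p q (Nat.findGreatest (L · ≤ v.val) ℓ) v.val
  | Sum.inr (Sum.inr h) => (chartPair L lam p q (h.val + 1)).1

variable {n ℓ : ℕ} {L : ℕ → ℕ} {lam : ℕ → ℕ → ℂ} {p q : ℂ}

theorem chartPair_succ (i : ℕ) :
    chartPair L lam p q (i + 1) =
      ((chartPair L lam p q i).2 * (chartPair L lam p q i).1 - lam (i + 1) 0,
        (chartPair L lam p q i).2 * ∏ u ∈ Finset.Ico (L i) (L (i + 1)), blockValue L lam p q i u) :=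
  rfl

theorem IsTailSequence.findGreatest_eq (hL : IsTailSequence n ℓ L) {i u : ℕ} (hi : i ≤ ℓ)
    (h1 : L i ≤ u) (h2 : u < L (i + 1)) : Nat.findGreatest (L · ≤ u) ℓ = i := by
  refine Nat.findGreatest_eq_iff.mpr ⟨hi, fun _ => h1, fun j hij hj hju => ?_⟩
  have := hL.mono (i := i + 1) (j := j) hij (by omega)
  omega

theorem chartRep_cc {v : ℕ} (hv : v ≤ n) :
    chartRep n ℓ L lam p q (cc n ℓ v) = if v = 1 then p else 1 := by
  simp [cc, chartRep, Fin.val_cast_of_lt (Nat.lt_succ_of_le hv)]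

theorem chartRep_onChart : OnChart (chartRep n ℓ L lam p q) :=
  ⟨by rw [chartRep_cc (Nat.zero_le n), if_neg zero_ne_one],
    fun v hv2 hvn => by rw [chartRep_cc hvn, if_neg (by omega)]⟩

theorem chartRep_aa_zero : chartRep n ℓ L lam p q (aa n ℓ 0) = q := by
  simp [aa, chartRep]

theorem chartRep_kArr (hL : IsTailSequence n ℓ L) {i : ℕ} (hi : i ≤ ℓ + 1) :
    chartRep n ℓ L lam p q (kArr n ℓ i) = (chartPair L lam p q i).1 := by
  rcases Nat.eq_zero_or_pos i with rfl | hi0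
  · rw [kArr_zero, chartRep_cc hL.one_le_n, if_pos rfl]
    rfl
  rcases hi.lt_or_eq with hiℓ | rfl
  · obtain ⟨h, rfl⟩ : ∃ h : Fin ℓ, i = h.val + 1 :=
      ⟨⟨i - 1, by omega⟩, (Nat.sub_add_cancel hi0).symm⟩
    rw [kArr_succ_val]
    rfl
  · simp [kArr_top, aa, chartRep, (Nat.one_le_iff_ne_zero.mp hL.one_le_n)]

theorem chartRep_aa (hL : IsTailSequence n ℓ L) {i u : ℕ} (hi : i ≤ ℓ) (h1 : L i ≤ u)
    (h2 : u < L (i + 1)) : chartRep n ℓ L lam p q (aa n ℓ u) = blockValue L lam p q i u := by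
  have hu0 : 1 ≤ u := (hL.one_le (by omega)).trans h1
  have hun : u < n := h2.trans_le (hL.le_top (by omega))
  simp only [aa, chartRep, Fin.val_cast_of_lt (Nat.lt_succ_of_lt hun), if_neg hun.ne,
    if_neg (Nat.one_le_iff_ne_zero.mp hu0), hL.findGreatest_eq hi h1 h2]

theorem chartRep_xaPath (hL : IsTailSequence n ℓ L) {i : ℕ} (hi : i ≤ ℓ + 1) :
    xaPath n ℓ (chartRep n ℓ L lam p q) (L i) = (chartPair L lam p q i).2 := by
  induction i with
  | zero => simp [hL.zero, xaPath, chartRep_aa_zero, chartPair]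
  | succ i ih =>
    rw [xaPath_eq_mul_prod_Ico _ (hL.mono (Nat.le_succ i) hi), ih (by omega), chartPair_succ]
    exact congrArg _ (Finset.prod_congr rfl fun u hu =>
      chartRep_aa hL (by omega) (Finset.mem_Ico.mp hu).1 (Finset.mem_Ico.mp hu).2)

theorem chartRecurrence_chartRep (hL : IsTailSequence n ℓ L) {i : ℕ} (hi : i ≤ ℓ) :
    ChartRecurrence L lam (chartRep n ℓ L lam p q) i := by
  refine ⟨?_, fun u h1 h2 => ?_⟩
  · rw [chartRep_kArr hL (by omega), chartRep_kArr hL (by omega), chartRep_xaPath hL (by omega)]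
    rfl
  · rw [chartRep_aa hL hi h1 h2, chartRep_kArr hL (by omega), chartRep_xaPath hL (by omega)]
    rfl

end Construction

end ChartW0

open ChartW0

theorem chart_W0_bijective_general
    -- Hirzebruch–Jung expansions r/a = [α_1,…,α_n], r/(r−a) = [β_1,…,β_m]
    (n m ℓ : ℕ) (βs : List ℕ)
    -- ℓ = Σ(α_i − 2), e = ℓ + 3 = m + 2
    (hm : m = ℓ + 1)
    -- l_h = tail vertex of k_h: weakly increasing, l_0 = 1, l_{ℓ+1} = n, with
    -- α_i − 2 of the extra arrows having tail i; Riemenschneider duality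
    (L : ℕ → ℕ) (hL0 : L 0 = 1) (hLtop : L (ℓ + 1) = n)
    (hLmono : ∀ h₁ h₂, h₁ ≤ h₂ → h₂ ≤ ℓ + 1 → L h₁ ≤ L h₂)
    (hdual : ∀ t, 1 ≤ t → t ≤ m → βs.getD (t - 1) 0 = L t - L (t - 1) + 2)
    -- λ ∈ Δ
    (lam : ℕ → ℕ → ℂ) (hlam : InDelta ℓ (fun t => βs.getD (t - 1) 0) lam) :
    Function.Bijective
      (fun x : {x : Arrow n ℓ → ℂ //
          IsLamRep n ℓ L (fun t => βs.getD (t - 1) 0) lam x ∧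
          x (cc n ℓ 0) = 1 ∧ ∀ v, 2 ≤ v → v ≤ n → x (cc n ℓ v) = 1} =>
        ((x.val (cc n ℓ 1), x.val (aa n ℓ 0)) : ℂ × ℂ)) := by
  have hL : IsTailSequence n ℓ L := ⟨hL0, hLtop, fun i hi j hj hij => hLmono i j hij hj⟩
  have hβ : ∀ i, 1 ≤ i → i ≤ ℓ + 1 → βs.getD (i - 1) 0 = L i - L (i - 1) + 2 :=
    fun i hi1 hi2 => hdual i hi1 (hm ▸ hi2)
  refine ⟨fun x y hxy => ?_, fun ⟨p, q⟩ => ?_⟩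
  · obtain ⟨h1, h0⟩ := Prod.mk.inj hxy
    exact Subtype.ext <| eq_of_chartRecurrence hL x.2.2 y.2.2
      (fun i hi => chartRecurrence_of_isLamRep hL x.2.1 x.2.2 hi)
      (fun i hi => chartRecurrence_of_isLamRep hL y.2.1 y.2.2 hi) h1 h0
  · refine ⟨⟨chartRep n ℓ L lam p q, isLamRep_of_chartRecurrence hL hβ hlam chartRep_onChart
      fun i hi => chartRecurrence_chartRep hL hi, chartRep_onChart⟩, ?_⟩
    simp only [chartRep_cc hL.one_le_n, if_true, chartRep_aa_zero]

/-- for `a > 1` and `λ ∈ Δ`, the map `x ↦ (x(c_{1,0}), x(a_{0,1}))` is a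
bijection from the set of `λ`-representations with
`x(c_{0,n}) = x(c_{n,n−1}) = ⋯ = x(c_{2,1}) = 1` onto `ℂ²` (the chart `W_0`). -/
theorem chart_W0_bijective
    -- the group 1/r(1,a) with r > a ≥ 1 coprime
    (r a : ℕ) (ha : 1 ≤ a) (hra : a < r) (hcop : Nat.Coprime r a)
    -- Hirzebruch–Jung expansions r/a = [α_1,…,α_n], r/(r−a) = [β_1,…,β_m]
    (n m ℓ : ℕ) (αs βs : List ℕ) (hn1 : 1 ≤ n)
    (hαlen : αs.length = n) (hα2 : ∀ x ∈ αs, 2 ≤ x)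
    (hαcf : hjcf (αs.map (fun x => (x : ℚ))) = (r : ℚ) / (a : ℚ))
    (hβlen : βs.length = m) (hβ2 : ∀ x ∈ βs, 2 ≤ x)
    (hβcf : hjcf (βs.map (fun x => (x : ℚ))) = (r : ℚ) / ((r : ℚ) - (a : ℚ)))
    -- ℓ = Σ(α_i − 2), e = ℓ + 3 = m + 2
    (hl : ℓ = ∑ i ∈ Finset.range n, (αs.getD i 0 - 2))
    (hm : m = ℓ + 1)
    -- l_h = tail vertex of k_h: weakly increasing, l_0 = 1, l_{ℓ+1} = n, with
    -- α_i − 2 of the extra arrows having tail i; Riemenschneider duality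
    (L : ℕ → ℕ) (hL0 : L 0 = 1) (hLtop : L (ℓ + 1) = n)
    (hLmono : ∀ h₁ h₂, h₁ ≤ h₂ → h₂ ≤ ℓ + 1 → L h₁ ≤ L h₂)
    (hLrange : ∀ h, 1 ≤ h → h ≤ ℓ → 1 ≤ L h ∧ L h ≤ n)
    (hmult : ∀ i, 1 ≤ i → i ≤ n →
      ((Finset.Icc 1 ℓ).filter (fun h => L h = i)).card = αs.getD (i - 1) 0 - 2)
    (hdual : ∀ t, 1 ≤ t → t ≤ m → βs.getD (t - 1) 0 = L t - L (t - 1) + 2)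
    -- a > 1
    (ha1 : 1 < a)
    -- λ ∈ Δ
    (lam : ℕ → ℕ → ℂ) (hlam : InDelta ℓ (fun t => βs.getD (t - 1) 0) lam) :
    Function.Bijective
      (fun x : {x : Arrow n ℓ → ℂ //
          IsLamRep n ℓ L (fun t => βs.getD (t - 1) 0) lam x ∧
          x (cc n ℓ 0) = 1 ∧ ∀ v, 2 ≤ v → v ≤ n → x (cc n ℓ v) = 1} =>
        ((x.val (cc n ℓ 1), x.val (aa n ℓ 0)) : ℂ × ℂ)) :=
  chart_W0_bijective_general n m ℓ βs hm L hL0 hLtop hLmono hdual lam hlam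
end
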